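/- The set X̄ = {(X(a), Y(a)) : k ≥ 1, a ∈ {0,1}^k} equals the set {(c + dφ, c + dψ) : c, d ∈ ℤ, d ≥ 0, c + dψ ∈ [−1/φ², 1/φ)}. -/

import Mathlib

/-!
Since `x ^ (n + 1) = F_{n+1} x + F_n` for `x = φ, ψ`, every word has `X(a) = C(a) + N(a) φ` and
`Y(a) = C(a) + N(a) ψ` with `C(a) = ∑ a_i F_{k+1-i}`. Appending a letter `b` maps `Y` to
`ψ Y + b ψ²`, and this map keeps the interval `(-ψ², -ψ² + 1) = (-1/φ², 1/φ)` invariant, so `Y(a)`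
lies in it. Conversely, greedily every `d < F_{k+2}` is `N(a)` for a binary word of length `k`;
since the interval has length one, `c + d ψ` lying in it forces `c = C(a)`.
-/

open Real Finset

noncomputable section

/-- The golden mean φ = (1+√5)/2. -/
def phi : ℝ := (1 + Real.sqrt 5) / 2

/-- ψ = (1−√5)/2 = −1/φ. -/
def psi : ℝ := (1 - Real.sqrt 5) / 2

/-- A word `a : Fin k → ℕ` is binary if all its letters are 0 or 1. -/
def IsBin {k : ℕ} (a : Fin k → ℕ) : Prop := ∀ i, a i ≤ 1

/-- N(a) = ∑_{i=1}^k a_i F_{k+2−i}  (here `i : Fin k` corresponds to `i+1`). -/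
def Nw {k : ℕ} (a : Fin k → ℕ) : ℕ := ∑ i : Fin k, a i * Nat.fib (k + 1 - (i : ℕ))

/-- X(a) = ∑_{i=1}^k a_i φ^{k+2−i}. -/
def Xw {k : ℕ} (a : Fin k → ℕ) : ℝ := ∑ i : Fin k, (a i : ℝ) * phi ^ (k + 1 - (i : ℕ))

/-- Y(a) = ∑_{i=1}^k a_i ψ^{k+2−i}. -/
def Yw {k : ℕ} (a : Fin k → ℕ) : ℝ := ∑ i : Fin k, (a i : ℝ) * psi ^ (k + 1 - (i : ℕ))

open scoped goldenRatio

lemma phi_eq_goldenRatio : phi = φ := rfl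

lemma psi_eq_goldenConj : psi = ψ := rfl

lemma Ico_one_div_goldenRatio_eq :
    Set.Ico (-(1 / φ ^ 2)) (1 / φ) = Set.Ico (-ψ ^ 2) (-ψ ^ 2 + 1) := by
  rw [one_div, one_div, ← inv_pow, inv_goldenRatio, neg_sq, goldenConj_sq]
  congr 1
  ring

def Cw {k : ℕ} (a : Fin k → ℕ) : ℕ := ∑ i : Fin k, a i * Nat.fib (k - (i : ℕ))

lemma sum_mul_pow_eq_Cw_add_Nw_mul {x : ℝ}
    (hx : ∀ n : ℕ, x * Nat.fib (n + 1) + Nat.fib n = x ^ (n + 1)) {k : ℕ} (a : Fin k → ℕ) :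
    ∑ i : Fin k, (a i : ℝ) * x ^ (k + 1 - (i : ℕ)) = Cw a + Nw a * x := by
  simp only [Cw, Nw, Nat.cast_sum, Nat.cast_mul, Finset.sum_mul, ← Finset.sum_add_distrib]
  refine Finset.sum_congr rfl fun i _ => ?_
  rw [Nat.sub_add_comm i.is_lt.le, ← hx]
  ring

lemma Xw_eq {k : ℕ} (a : Fin k → ℕ) : Xw a = Cw a + Nw a * φ :=
  sum_mul_pow_eq_Cw_add_Nw_mul goldenRatio_mul_fib_succ_add_fib a

lemma Yw_eq {k : ℕ} (a : Fin k → ℕ) : Yw a = Cw a + Nw a * ψ :=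
  sum_mul_pow_eq_Cw_add_Nw_mul goldenConj_mul_fib_succ_add_fib a

lemma Yw_eq_mul_Yw_init_add {k : ℕ} (a : Fin (k + 1) → ℕ) :
    Yw a = ψ * Yw (Fin.init a) + a (Fin.last k) * ψ ^ 2 := by
  simp only [Yw, psi_eq_goldenConj, Fin.sum_univ_castSucc, Finset.mul_sum, Fin.init,
    Fin.val_castSucc, Fin.val_last]
  congr 1
  · refine Finset.sum_congr rfl fun i _ => ?_
    rw [show k + 1 + 1 - (i : ℕ) = k + 1 - i + 1 by omega]
    ring
  · congr 2
    omega

lemma goldenConj_mul_add_mem_Ioo {y : ℝ} (hy : y ∈ Set.Ioo (-ψ ^ 2) (-ψ ^ 2 + 1)) {b : ℕ}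
    (hb : b ≤ 1) : ψ * y + b * ψ ^ 2 ∈ Set.Ioo (-ψ ^ 2) (-ψ ^ 2 + 1) := by
  obtain ⟨hy₁, hy₂⟩ := hy
  interval_cases b <;> push_cast <;> constructor <;>
    nlinarith [goldenConj_neg, neg_one_lt_goldenConj, goldenConj_sq]

lemma Yw_mem_Ioo {k : ℕ} {a : Fin k → ℕ} (ha : IsBin a) :
    Yw a ∈ Set.Ioo (-ψ ^ 2) (-ψ ^ 2 + 1) := by
  induction k with
  | zero =>
    simp only [Yw, Finset.univ_eq_empty, Finset.sum_empty]
    constructor <;> nlinarith [goldenConj_neg, goldenConj_sq]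
  | succ k ih =>
    rw [Yw_eq_mul_Yw_init_add]
    exact goldenConj_mul_add_mem_Ioo (ih fun i => ha i.castSucc) (ha _)

lemma isBin_cons_iff {k b : ℕ} {a : Fin k → ℕ} :
    IsBin (Fin.cons b a : Fin (k + 1) → ℕ) ↔ b ≤ 1 ∧ IsBin a :=
  Fin.forall_fin_succ

lemma Nw_cons {k : ℕ} (b : ℕ) (a : Fin k → ℕ) :
    Nw (Fin.cons b a : Fin (k + 1) → ℕ) = b * Nat.fib (k + 2) + Nw a := by
  simp only [Nw, Fin.sum_univ_succ, Fin.cons_zero, Fin.cons_succ, Fin.val_zero, Fin.val_succ]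
  congr 1
  refine Finset.sum_congr rfl fun i _ => ?_
  congr 2
  omega

lemma exists_isBin_Nw_eq {k n : ℕ} (hn : n < Nat.fib (k + 2)) :
    ∃ a : Fin k → ℕ, IsBin a ∧ Nw a = n := by
  induction k generalizing n with
  | zero => exact ⟨Fin.elim0, fun i => i.elim0, by simp_all [Nw]⟩
  | succ k ih =>
    have hfib : Nat.fib (k + 1 + 2) = Nat.fib (k + 1) + Nat.fib (k + 2) := Nat.fib_add_two
    have hmono : Nat.fib (k + 1) ≤ Nat.fib (k + 2) := Nat.fib_le_fib_succ
    by_cases hlt : n < Nat.fib (k + 2)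
    · obtain ⟨a, ha, rfl⟩ := ih hlt
      exact ⟨Fin.cons 0 a, isBin_cons_iff.2 ⟨zero_le_one, ha⟩, by simp [Nw_cons]⟩
    · obtain ⟨a, ha, hN⟩ := ih (n := n - Nat.fib (k + 2)) (by omega)
      exact ⟨Fin.cons 1 a, isBin_cons_iff.2 ⟨le_rfl, ha⟩, by rw [Nw_cons]; omega⟩

lemma Int.eq_of_add_mem_Ico {c c' : ℤ} {u y : ℝ} (h : c + y ∈ Set.Ico u (u + 1))
    (h' : c' + y ∈ Set.Ico u (u + 1)) : c = c' := by
  have ceil_eq {c : ℤ} (h : c + y ∈ Set.Ico u (u + 1)) : ⌈u - y⌉ = c := by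
    rw [Int.ceil_eq_iff]
    constructor <;> linarith [h.1, h.2]
  rw [← ceil_eq h, ← ceil_eq h']

/-- the set X̄ = {(X(a), Y(a)) : k ≥ 1, a ∈ {0,1}^k} equals
{(c + dφ, c + dψ) : c, d ∈ ℤ, d ≥ 0, c + dψ ∈ [−1/φ², 1/φ)}. -/
theorem stmt_4 :
    {p : ℝ × ℝ | ∃ (k : ℕ) (a : Fin k → ℕ), 1 ≤ k ∧ IsBin a ∧ p = (Xw a, Yw a)} =
    {p : ℝ × ℝ | ∃ c d : ℤ, 0 ≤ d ∧ p = ((c : ℝ) + (d : ℝ) * phi, (c : ℝ) + (d : ℝ) * psi) ∧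
      (c : ℝ) + (d : ℝ) * psi ∈ Set.Ico (-(1 / phi ^ 2)) (1 / phi)} := by
  rw [phi_eq_goldenRatio, psi_eq_goldenConj, Ico_one_div_goldenRatio_eq]
  ext p
  constructor
  · rintro ⟨k, a, -, ha, rfl⟩
    refine ⟨Cw a, Nw a, Int.natCast_nonneg _, ?_, ?_⟩
    · simp [Xw_eq, Yw_eq]
    · simpa [Yw_eq] using Set.Ioo_subset_Ico_self (Yw_mem_Ioo ha)
  · rintro ⟨c, d, hd, rfl, hy⟩
    lift d to ℕ using hd
    obtain ⟨a, ha, hN⟩ := exists_isBin_Nw_eq (k := d + 1) (n := d)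
      ((Nat.fib_add_two_strictMono.id_le d).trans_lt (Nat.fib_add_two_strictMono d.lt_succ_self))
    rw [← hN] at hy ⊢
    have hCw : ((Cw a : ℤ) : ℝ) + ((Nw a : ℤ) : ℝ) * ψ ∈ Set.Ico (-ψ ^ 2) (-ψ ^ 2 + 1) := by
      exact_mod_cast Yw_eq a ▸ Set.Ioo_subset_Ico_self (Yw_mem_Ioo ha)
    have hc : c = Cw a := Int.eq_of_add_mem_Ico hy hCw
    refine ⟨d + 1, a, by omega, ha, ?_⟩
    simp [Xw_eq, Yw_eq, hc]
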